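/- Let L be a restricted Lie algebra such that every restricted subalgebra of L is a restricted quasi-ideal. Then [L,L] ⊆ L^[p], and L^3 = L^{p+1}; in particular, if L is nilpotent then L has nilpotency class at most 2. -/

import Mathlib

open LieAlgebra Module

section Preamble

variable (F : Type*) [Field F] (L : Type*) [LieRing L] [LieAlgebra F L]

/-- `pm` is a `p`-mapping making the Lie algebra `L` into a restricted Lie algebra. -/
structure IsPMapping (p : ℕ) (pm : L → L) : Prop where
  ad_pow : ∀ x y : L, ⁅pm x, y⁆ = ((LieAlgebra.ad F L x) ^ p) y
  smul_pow : ∀ (c : F) (x : L), pm (c • x) = c ^ p • pm x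
  add_pm : ∀ x y : L, pm (x + y) - pm x - pm y ∈ LieSubalgebra.lieSpan F L {x, y}

variable {L}

/-- A restricted subalgebra: a subalgebra closed under the `p`-mapping. -/
def IsPSub (pm : L → L) (S : LieSubalgebra F L) : Prop := ∀ x ∈ S, pm x ∈ S

/-- The restricted subalgebra generated by a set. -/
def pSpan (pm : L → L) (s : Set L) : LieSubalgebra F L :=
  sInf {S : LieSubalgebra F L | IsPSub F pm S ∧ s ⊆ S}

/-- A maximal restricted subalgebra. -/
def IsMaxPSub (pm : L → L) (M : LieSubalgebra F L) : Prop :=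
  IsPSub F pm M ∧ M ≠ ⊤ ∧ ∀ S : LieSubalgebra F L, IsPSub F pm S → M < S → S = ⊤

/-- `U` is a maximal (restricted) subalgebra of the restricted subalgebra `V`. -/
def IsMaxIn (pm : L → L) (U V : LieSubalgebra F L) : Prop :=
  U < V ∧ ∀ W : LieSubalgebra F L, IsPSub F pm W → U < W → W < V → False

/-- A restricted quasi-ideal. -/
def IsPQuasiIdeal (pm : L → L) (S : LieSubalgebra F L) : Prop :=
  IsPSub F pm S ∧ ∀ H : LieSubalgebra F L, IsPSub F pm H →
    ∀ s ∈ S, ∀ h ∈ H, ⁅s, h⁆ ∈ S.toSubmodule ⊔ H.toSubmodule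

/-- A `p`-nilpotent element. -/
def IsPNilpotentElt (pm : L → L) (x : L) : Prop := ∃ n : ℕ, 0 < n ∧ pm^[n] x = 0

variable (L)

/-- Every restricted subalgebra is an intersection of maximal restricted subalgebras. -/
def DuallyAtomisticP (pm : L → L) : Prop :=
  ∀ S : LieSubalgebra F L, IsPSub F pm S →
    ∃ 𝓜 : Set (LieSubalgebra F L), (∀ M ∈ 𝓜, IsMaxPSub F pm M) ∧ S = sInf 𝓜

/-- Every (ordinary) subalgebra is an intersection of maximal (ordinary) subalgebras. -/
def DuallyAtomistic : Prop :=
  ∀ S : LieSubalgebra F L,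
    ∃ 𝓜 : Set (LieSubalgebra F L),
      (∀ M ∈ 𝓜, M ≠ ⊤ ∧ ∀ S' : LieSubalgebra F L, M < S' → S' = ⊤) ∧ S = sInf 𝓜

/-- An almost abelian Lie algebra: `L = F x ∔ A` with `A` an abelian ideal on which
`ad x` acts as the identity. -/
def IsAlmostAbelian : Prop :=
  ∃ (x : L) (A : LieIdeal F L), IsLieAbelian A ∧ (∀ a ∈ A, ⁅x, a⁆ = a) ∧
    x ∉ A ∧ Submodule.span F {x} ⊔ A.toSubmodule = ⊤

/-- `N` is the nilradical of `L`: the largest nilpotent ideal. -/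
def IsNilradical (N : LieIdeal F L) : Prop :=
  LieModule.IsNilpotent N N ∧ ∀ I : LieIdeal F L, LieModule.IsNilpotent I I → I ≤ N

/-- Upper semimodularity of the lattice of restricted subalgebras. -/
def UpperSemimodularP (pm : L → L) : Prop :=
  ∀ S T : LieSubalgebra F L, IsPSub F pm S → IsPSub F pm T →
    IsMaxIn F pm (S ⊓ T) T → IsMaxIn F pm S (pSpan F pm ((S : Set L) ∪ (T : Set L)))

/-- Lower semimodularity of the lattice of restricted subalgebras. -/
def LowerSemimodularP (pm : L → L) : Prop :=
  ∀ U B : LieSubalgebra F L, IsPSub F pm U → IsPSub F pm B →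
    IsMaxIn F pm U (pSpan F pm ((U : Set L) ∪ (B : Set L))) → IsMaxIn F pm (U ⊓ B) B

/-- `L` is supersolvable: it admits a complete flag of ideals. -/
def IsSupersolvable : Prop :=
  ∃ (n : ℕ) (f : Fin (n + 1) → LieIdeal F L), Monotone f ∧ f 0 = ⊥ ∧ f (Fin.last n) = ⊤ ∧
    ∀ j : Fin (n + 1), Module.finrank F (f j : Submodule F L) = (j : ℕ)

end Preamble

/-!
Write `P = L^[p]` (note that `lowerCentralSeries F L L k` is `L^{k+1}`). The restricted
subalgebra spanned by `v, v^[p], v^[p^2], …` is abelian and lies in `F v + P`, so quasi-ideality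
against it gives `⁅x, u⁆ ∈ F x + F u + P`, and `⁅w, v⁆ ∈ F v + P` for `w ∈ P`: each `w ∈ P` acts
on `L / P` as a scalar. If some `q ∈ P` acted as the identity, then modulo the kernel `K` of
this scalar, which is an ideal of `L`, `q` still acts as the identity outside `P`, while brackets
of two elements outside `P` fall into `K`; for `⁅q + v, v⁆ = ⁅q, v⁆` this forces `v ∈ P`. Hence `P`
is an ideal, so `(ad x) ^ p u = ⁅x^[p], u⁆ ∈ P`. Modulo `P`, a bracket `⁅x, u⁆ ≡ a x + b u` is an
eigenvector of `ad x` with eigenvalue `b` and of `ad u` with eigenvalue `-a`, so `b ≠ 0` or `a ≠ 0`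
forces `⁅x, u⁆ ∈ P`, and so does `a = b = 0`.

Consequently `[L, [L, L]] ⊆ [L, P]`, which lies in any ideal `N` with `(ad x) ^ p L ⊆ N`. Taking
`N = L^{p+1}` gives `L^3 = L^{p+1}`. For nilpotent `L`, induction on `k` gives
`⁅x, ⁅x, u⁆⁆ ∈ L^k` for all `k` (for `p = 2` through the pencil `t x - u`), so `N = 0` qualifies.
-/

section LinearAlgebra

variable {K V : Type*} [Field K] [AddCommGroup V] [Module K V] {W : Submodule K V}

theorem Submodule.exists_sub_smul_mem_of_mem_span_singleton_sup {v x : V}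
    (hx : x ∈ Submodule.span K {v} ⊔ W) : ∃ t : K, x - t • v ∈ W := by
  obtain ⟨y, hy, w, hw, rfl⟩ := Submodule.mem_sup.mp hx
  obtain ⟨t, rfl⟩ := Submodule.mem_span_singleton.mp hy
  exact ⟨t, by simpa using hw⟩

theorem Submodule.pow_apply_sub_pow_smul_mem {f : Module.End K V} (hf : ∀ w ∈ W, f w ∈ W)
    {e : V} {c : K} (he : f e - c • e ∈ W) (n : ℕ) : (f ^ n) e - c ^ n • e ∈ W := by
  induction n with
  | zero => simp
  | succ n ih =>
    have h : (f ^ (n + 1)) e - c ^ (n + 1) • e =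
        f ((f ^ n) e - c ^ n • e) + c ^ n • (f e - c • e) := by
      rw [pow_succ', Module.End.mul_apply, map_sub, map_smul, pow_succ]
      module
    rw [h]
    exact W.add_mem (hf _ ih) (W.smul_mem _ he)

/-- Every vector being an eigenvector of `f` modulo `W`, `f` acts on `V ⧸ W` as a scalar. -/
theorem Submodule.apply_mem_of_forall_exists_sub_smul_mem {f : V →ₗ[K] V}
    (hf : ∀ v, ∃ t : K, f v - t • v ∈ W) {v₀ : V} (hv₀ : v₀ ∉ W) (hfv₀ : f v₀ ∈ W)
    (v : V) : f v ∈ W := by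
  have hfW : ∀ w ∈ W, f w ∈ W := fun w hw => by
    obtain ⟨t, ht⟩ := hf w
    simpa using W.add_mem ht (W.smul_mem t hw)
  obtain ⟨t, ht⟩ := hf v
  obtain ⟨s, hs⟩ := hf (v + v₀)
  have key : (s - t) • v + s • v₀ ∈ W := by
    convert W.sub_mem (W.add_mem ht hfv₀) hs using 1
    rw [map_add]
    module
  by_cases hst : s = t
  · subst hst
    have hs0 : s = 0 := by
      by_contra hs0
      exact hv₀ ((W.smul_mem_iff hs0).mp (by simpa using key))
    simpa [hs0] using ht
  · have hv : v + ((s - t)⁻¹ * s) • v₀ ∈ W := by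
      convert W.smul_mem (s - t)⁻¹ key using 1
      rw [smul_add, smul_smul, smul_smul, inv_mul_cancel₀ (sub_ne_zero.mpr hst), one_smul]
    convert W.sub_mem (hfW _ hv) (W.smul_mem ((s - t)⁻¹ * s) hfv₀) using 1
    rw [map_add, map_smul, add_sub_cancel_right]

end LinearAlgebra

section Restricted

variable {F : Type*} [Field F] {L : Type*} [LieRing L] [LieAlgebra F L] {p : ℕ} {pm : L → L}

theorem ad_pow_apply_eq_zero_of_lie_eq_zero {x y : L} (h : ⁅x, y⁆ = 0) {n : ℕ}
    (hn : n ≠ 0) : (ad F L x ^ n) y = 0 := by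
  obtain ⟨m, rfl⟩ := Nat.exists_eq_succ_of_ne_zero hn
  rw [pow_succ, Module.End.mul_apply, ad_apply, h, map_zero]

theorem LieSubalgebra.ad_pow_apply_mem (S : LieSubalgebra F L) {x y : L} (hx : x ∈ S)
    (hy : y ∈ S) (n : ℕ) : (ad F L x ^ n) y ∈ S :=
  LieSubalgebra.coe_ad_pow F L S ⟨x, hx⟩ ⟨y, hy⟩ n ▸
    ((ad F S ⟨x, hx⟩ ^ n) ⟨y, hy⟩).2

theorem LieIdeal.ad_pow_apply_mem (I : LieIdeal F L) (x : L) {y : L} (hy : y ∈ I) (n : ℕ) :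
    (ad F L x ^ n) y ∈ I :=
  LieSubmodule.coe_toEnd_pow F L L I x ⟨y, hy⟩ n ▸
    ((LieModule.toEnd F L I x ^ n) ⟨y, hy⟩).2

namespace IsPMapping

variable (hpm : IsPMapping F L p pm)
include hpm

theorem ad_map (x : L) : ad F L (pm x) = ad F L x ^ p :=
  LinearMap.ext (hpm.ad_pow x)

theorem ad_iterate (x : L) (k : ℕ) : ad F L (pm^[k] x) = ad F L x ^ p ^ k := by
  induction k with
  | zero => simp
  | succ k ih => rw [Function.iterate_succ_apply', hpm.ad_map, ih, ← pow_mul, ← pow_succ]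

theorem map_zero [NeZero p] : pm 0 = 0 := by
  simpa [zero_pow (NeZero.ne p)] using hpm.smul_pow 0 0

theorem lie_iterate_self [NeZero p] (x : L) (k : ℕ) : ⁅pm^[k] x, x⁆ = 0 := by
  rw [← ad_apply (R := F), hpm.ad_iterate]
  exact ad_pow_apply_eq_zero_of_lie_eq_zero (lie_self x) (pow_ne_zero _ (NeZero.ne p))

end IsPMapping

section pSpan

variable {s : Set L}

theorem subset_pSpan : s ⊆ pSpan F pm s := fun x hx => by
  rw [pSpan, LieSubalgebra.coe_sInf]
  exact Set.mem_iInter₂.mpr fun S hS => hS.2 hx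

theorem pSpan_le {S : LieSubalgebra F L} (hS : IsPSub F pm S) (hs : s ⊆ S) : pSpan F pm s ≤ S :=
  sInf_le ⟨hS, hs⟩

variable (F) in
/-- The paper's `L^[p]`. -/
def pPower (pm : L → L) : LieSubalgebra F L := pSpan F pm (Set.range pm)

theorem pm_mem_pPower (x : L) : pm x ∈ pPower F pm :=
  subset_pSpan ⟨x, rfl⟩

theorem pPower_le {S : LieSubalgebra F L} (hS : ∀ x, pm x ∈ S) : pPower F pm ≤ S :=
  pSpan_le (fun x _ => hS x) (Set.range_subset_iff.mpr hS)

theorem isPSub_pPower : IsPSub F pm (pPower F pm) := fun x _ => pm_mem_pPower x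

end pSpan

section pOrbit

variable (F) in
def pOrbitSpan (pm : L → L) (v : L) : Submodule F L :=
  Submodule.span F (Set.range fun k : ℕ => pm^[k] v)

theorem iterate_mem_pOrbitSpan (v : L) (k : ℕ) : pm^[k] v ∈ pOrbitSpan F pm v :=
  Submodule.subset_span ⟨k, rfl⟩

theorem pOrbitSpan_le_span_singleton_sup (v : L) :
    pOrbitSpan F pm v ≤ Submodule.span F {v} ⊔ pOrbitSpan F pm (pm v) := by
  refine Submodule.span_le.mpr ?_
  rintro _ ⟨_ | k, rfl⟩
  · exact Submodule.mem_sup_left (Submodule.mem_span_singleton_self v)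
  · exact Submodule.mem_sup_right (iterate_mem_pOrbitSpan (pm v) k)

theorem pOrbitSpan_map_le (v : L) : pOrbitSpan F pm (pm v) ≤ pOrbitSpan F pm v :=
  Submodule.span_le.mpr <| by
    rintro _ ⟨k, rfl⟩
    exact iterate_mem_pOrbitSpan v (k + 1)

theorem pOrbitSpan_map_le_pPower (v : L) :
    pOrbitSpan F pm (pm v) ≤ (pPower F pm).toSubmodule := by
  refine Submodule.span_le.mpr ?_
  rintro _ ⟨k, rfl⟩
  show pm^[k] (pm v) ∈ pPower F pm
  rw [← Function.iterate_succ_apply, Function.iterate_succ_apply']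
  exact pm_mem_pPower _

variable [NeZero p] (hpm : IsPMapping F L p pm)
include hpm

theorem IsPMapping.lie_eq_zero_of_mem_pOrbitSpan {v z z' : L} (hz : z ∈ pOrbitSpan F pm v)
    (hz' : z' ∈ pOrbitSpan F pm v) : ⁅z, z'⁆ = 0 := by
  have hv : pOrbitSpan F pm v ≤ LinearMap.ker (ad F L v) :=
    Submodule.span_le.mpr <| by
      rintro _ ⟨k, rfl⟩
      rw [SetLike.mem_coe, LinearMap.mem_ker, ad_apply, ← lie_skew, hpm.lie_iterate_self,
        neg_zero]
  have hz'' : pOrbitSpan F pm v ≤ LinearMap.ker (ad F L z) :=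
    Submodule.span_le.mpr <| by
      rintro _ ⟨k, rfl⟩
      rw [SetLike.mem_coe, LinearMap.mem_ker, ad_apply, ← lie_skew, ← ad_apply (R := F),
        hpm.ad_iterate,
        ad_pow_apply_eq_zero_of_lie_eq_zero (hv hz) (pow_ne_zero _ (NeZero.ne p)), neg_zero]
  exact hz'' hz'

def IsPMapping.pOrbitAlg (v : L) : LieSubalgebra F L :=
  { pOrbitSpan F pm v with
    lie_mem' := fun hz hz' => by
      rw [hpm.lie_eq_zero_of_mem_pOrbitSpan hz hz']
      exact (pOrbitSpan F pm v).zero_mem }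

theorem IsPMapping.isPSub_of_toSubmodule_eq_span {S : LieSubalgebra F L} {s : Set L}
    (hS : S.toSubmodule = Submodule.span F s) (hs : ∀ x ∈ s, pm x ∈ S) :
    IsPSub F pm S := by
  have hspan : Submodule.span F s ≤ S.toSubmodule := hS.ge
  intro x hx
  rw [← LieSubalgebra.mem_toSubmodule, hS] at hx
  induction hx using Submodule.span_induction with
  | mem x hx => exact hs x hx
  | zero => rw [hpm.map_zero]; exact zero_mem S
  | add a b ha hb iha ihb =>
    have hab : LieSubalgebra.lieSpan F L {a, b} ≤ S := by
      rw [LieSubalgebra.lieSpan_le, Set.insert_subset_iff, Set.singleton_subset_iff]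
      exact ⟨hspan ha, hspan hb⟩
    have := add_mem (add_mem (hab (hpm.add_pm a b)) iha) ihb
    rwa [sub_sub, add_assoc, sub_add_cancel] at this
  | smul c x _ ihx => rw [hpm.smul_pow]; exact S.smul_mem _ ihx

theorem IsPMapping.isPSub_pOrbitAlg (v : L) : IsPSub F pm (hpm.pOrbitAlg v) :=
  hpm.isPSub_of_toSubmodule_eq_span rfl <| by
    rintro _ ⟨k, rfl⟩
    exact (Function.iterate_succ_apply' pm k v) ▸ iterate_mem_pOrbitSpan v (k + 1)

end pOrbit

namespace LieSubalgebra

variable (S : LieSubalgebra F L)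

/-- For `S = L^[p]`, this is the kernel of the scalar by which `L^[p]` acts on `L / L^[p]`. -/
def absorbing : LieSubalgebra F L where
  carrier := {z | z ∈ S ∧ ∀ v, ⁅z, v⁆ ∈ S}
  zero_mem' := ⟨S.zero_mem, fun v => by rw [zero_lie]; exact S.zero_mem⟩
  add_mem' := fun ha hb =>
    ⟨S.add_mem ha.1 hb.1, fun v => by rw [add_lie]; exact S.add_mem (ha.2 v) (hb.2 v)⟩
  smul_mem' := fun c _ hz =>
    ⟨S.smul_mem c hz.1, fun v => by rw [smul_lie]; exact S.smul_mem c (hz.2 v)⟩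
  lie_mem' := fun hz hz' => ⟨S.lie_mem hz.1 hz'.1, fun v => by
    rw [lie_lie]; exact S.sub_mem (S.lie_mem hz.1 (hz'.2 v)) (S.lie_mem hz'.1 (hz.2 v))⟩

variable {S}

theorem absorbing_le : S.absorbing ≤ S := fun _ hz => hz.1

theorem lie_mem_absorbing_of_mem {z v : L} (hz : z ∈ S.absorbing) (hv : v ∈ S) :
    ⁅z, v⁆ ∈ S.absorbing :=
  ⟨hz.2 v, fun y => by rw [lie_lie]; exact S.sub_mem (hz.2 _) (S.lie_mem hv (hz.2 y))⟩

theorem _root_.IsPMapping.isPSub_absorbing [NeZero p] (hpm : IsPMapping F L p pm)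
    (hS : IsPSub F pm S) : IsPSub F pm S.absorbing := fun z hz => by
  refine ⟨hS z hz.1, fun v => ?_⟩
  obtain ⟨n, hn⟩ := Nat.exists_eq_succ_of_ne_zero (NeZero.ne p)
  rw [hpm.ad_pow, hn, pow_succ, Module.End.mul_apply]
  exact S.ad_pow_apply_mem hz.1 (hz.2 v) n

end LieSubalgebra

end Restricted

section QuasiIdeal

open LieSubalgebra

variable {F : Type*} [Field F] {L : Type*} [LieRing L] [LieAlgebra F L] {p : ℕ} [NeZero p]
  {pm : L → L} (hpm : IsPMapping F L p pm)
  (hqi : ∀ S : LieSubalgebra F L, IsPSub F pm S → IsPQuasiIdeal F pm S)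
include hpm hqi

theorem exists_lie_sub_smul_mem_sup {S : LieSubalgebra F L} (hS : IsPSub F pm S) {s : L}
    (hs : s ∈ S) (v : L) :
    ∃ t : F, ⁅s, v⁆ - t • v ∈ S.toSubmodule ⊔ pOrbitSpan F pm (pm v) := by
  have h := (hqi S hS).2 (hpm.pOrbitAlg v) (hpm.isPSub_pOrbitAlg v) s hs v
    (iterate_mem_pOrbitSpan v 0)
  refine Submodule.exists_sub_smul_mem_of_mem_span_singleton_sup ?_
  rw [sup_left_comm]
  exact sup_le_sup_left (pOrbitSpan_le_span_singleton_sup (F := F) (pm := pm) v) _ h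

theorem exists_lie_sub_smul_sub_smul_mem (x u : L) :
    ∃ a b : F,
      ⁅x, u⁆ - a • x - b • u ∈ pOrbitSpan F pm (pm x) ⊔ pOrbitSpan F pm (pm u) := by
  obtain ⟨b, hb⟩ := exists_lie_sub_smul_mem_sup hpm hqi (hpm.isPSub_pOrbitAlg x)
    (iterate_mem_pOrbitSpan x 0) u
  obtain ⟨a, ha⟩ := Submodule.exists_sub_smul_mem_of_mem_span_singleton_sup
      (W := pOrbitSpan F pm (pm x) ⊔ pOrbitSpan F pm (pm u)) <| by
    rw [← sup_assoc]
    exact sup_le_sup_right (pOrbitSpan_le_span_singleton_sup (F := F) (pm := pm) x) _ hb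
  exact ⟨a, b, by rwa [sub_right_comm]⟩

theorem exists_lie_sub_smul_mem_pPower {w : L} (hw : w ∈ pPower F pm) (v : L) :
    ∃ t : F, ⁅w, v⁆ - t • v ∈ pPower F pm := by
  obtain ⟨t, ht⟩ := exists_lie_sub_smul_mem_sup hpm hqi isPSub_pPower hw v
  exact ⟨t, sup_le le_rfl (pOrbitSpan_map_le_pPower (F := F) (pm := pm) v) ht⟩

theorem lie_mem_pPower_of_lie_mem_pPower {w v₀ : L} (hw : w ∈ pPower F pm)
    (hv₀ : v₀ ∉ pPower F pm) (h₀ : ⁅w, v₀⁆ ∈ pPower F pm) (v : L) :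
    ⁅w, v⁆ ∈ pPower F pm :=
  Submodule.apply_mem_of_forall_exists_sub_smul_mem (W := (pPower F pm).toSubmodule)
    (f := ad F L w) (exists_lie_sub_smul_mem_pPower hpm hqi hw) hv₀ h₀ v

theorem mem_absorbing_of_lie_mem_pPower {w v : L} (hw : w ∈ pPower F pm)
    (hv : v ∉ pPower F pm) (hwv : ⁅w, v⁆ ∈ pPower F pm) : w ∈ (pPower F pm).absorbing :=
  ⟨hw, lie_mem_pPower_of_lie_mem_pPower hpm hqi hw hv hwv⟩

theorem pOrbitSpan_map_le_absorbing {v : L} (hv : v ∉ pPower F pm) :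
    pOrbitSpan F pm (pm v) ≤ (pPower F pm).absorbing.toSubmodule :=
  Submodule.span_le.mpr <| by
    rintro _ ⟨k, rfl⟩
    show pm^[k] (pm v) ∈ (pPower F pm).absorbing
    refine mem_absorbing_of_lie_mem_pPower hpm hqi
      (pOrbitSpan_map_le_pPower v (iterate_mem_pOrbitSpan _ k)) hv ?_
    rw [← Function.iterate_succ_apply, hpm.lie_iterate_self]
    exact zero_mem _

theorem lie_mem_absorbing_pPower {z : L} (hz : z ∈ (pPower F pm).absorbing) (v : L) :
    ⁅z, v⁆ ∈ (pPower F pm).absorbing := by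
  by_cases hv : v ∈ pPower F pm
  · exact lie_mem_absorbing_of_mem hz hv
  obtain ⟨t, ht⟩ :=
    exists_lie_sub_smul_mem_sup hpm hqi (hpm.isPSub_absorbing isPSub_pPower) hz v
  replace ht : ⁅z, v⁆ - t • v ∈ (pPower F pm).absorbing :=
    sup_le le_rfl (pOrbitSpan_map_le_absorbing hpm hqi hv) ht
  have ht0 : t = 0 := by
    by_contra ht0
    refine hv (((pPower F pm).toSubmodule.smul_mem_iff ht0).mp ?_)
    simpa using (pPower F pm).sub_mem (hz.2 v) (absorbing_le ht)
  simpa [ht0] using ht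

theorem lie_mem_absorbing_pPower' {z : L} (hz : z ∈ (pPower F pm).absorbing) (v : L) :
    ⁅v, z⁆ ∈ (pPower F pm).absorbing := by
  rw [← lie_skew]
  exact neg_mem (lie_mem_absorbing_pPower hpm hqi hz v)

section ActsAsIdentity

variable {q : L} (hq : q ∈ pPower F pm) (hqv : ∀ v, ⁅q, v⁆ - v ∈ pPower F pm)
include hq hqv

theorem exists_sub_smul_mem_absorbing {v₀ : L} (hv₀ : v₀ ∉ pPower F pm) {y : L}
    (hy : y ∈ pPower F pm) : ∃ μ : F, y - μ • q ∈ (pPower F pm).absorbing := by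
  obtain ⟨μ, hμ⟩ := exists_lie_sub_smul_mem_pPower hpm hqi hy v₀
  refine ⟨μ, mem_absorbing_of_lie_mem_pPower hpm hqi
    ((pPower F pm).sub_mem hy ((pPower F pm).smul_mem μ hq)) hv₀ ?_⟩
  convert (pPower F pm).sub_mem hμ ((pPower F pm).smul_mem μ (hqv v₀)) using 1
  rw [sub_lie, smul_lie]
  module

theorem lie_sub_mem_absorbing {v : L} (hv : v ∉ pPower F pm) :
    ⁅q, v⁆ - v ∈ (pPower F pm).absorbing := by
  set K := (pPower F pm).absorbing
  obtain ⟨μ, hμ⟩ := exists_sub_smul_mem_absorbing hpm hqi hq hqv hv (hqv v)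
  have hK : ∀ k ∈ K.toSubmodule, ad F L v k ∈ K.toSubmodule := fun k hk =>
    lie_mem_absorbing_pPower' hpm hqi hk v
  have he : ad F L v (v + μ • q) - (-μ) • (v + μ • q) ∈ K.toSubmodule := by
    convert K.toSubmodule.smul_mem (-μ) hμ using 1
    rw [ad_apply, lie_add, lie_self, lie_smul, ← lie_skew v q]
    module
  -- `(ad v) ^ p = ad (pm v)` maps into `K`, so the eigenvalue `-μ` above must vanish.
  have hpow := Submodule.pow_apply_sub_pow_smul_mem hK he p
  rw [← hpm.ad_map, ad_apply] at hpow
  have hpv : ⁅pm v, v + μ • q⁆ ∈ K := lie_mem_absorbing_pPower hpm hqi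
    (pOrbitSpan_map_le_absorbing hpm hqi hv (iterate_mem_pOrbitSpan _ 0)) _
  have h := K.sub_mem hpv hpow
  rw [sub_sub_cancel] at h
  have hμ0 : μ = 0 := by
    by_contra hμ0
    have he' := (K.toSubmodule.smul_mem_iff (pow_ne_zero p (neg_ne_zero.mpr hμ0))).mp h
    exact hv (by
      simpa using (pPower F pm).sub_mem (absorbing_le he') ((pPower F pm).smul_mem μ hq))
  simpa [hμ0] using hμ

theorem lie_mem_absorbing_of_not_mem_pPower {v v' : L} (hv : v ∉ pPower F pm)
    (hv' : v' ∉ pPower F pm) : ⁅v, v'⁆ ∈ (pPower F pm).absorbing := by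
  set K := (pPower F pm).absorbing
  obtain ⟨a, b, hab⟩ := exists_lie_sub_smul_sub_smul_mem hpm hqi v v'
  set r := ⁅v, v'⁆ - a • v - b • v'
  have hr : r ∈ K :=
    sup_le (pOrbitSpan_map_le_absorbing hpm hqi hv) (pOrbitSpan_map_le_absorbing hpm hqi hv') hab
  have hDv := lie_sub_mem_absorbing hpm hqi hq hqv hv
  have hDv' := lie_sub_mem_absorbing hpm hqi hq hqv hv'
  -- `y ↦ ⁅q, y⁆ - y` is a derivation up to adding `y`, and it preserves `K`
  have key : ⁅v, v'⁆ = (⁅q, r⁆ - r) + a • (⁅q, v⁆ - v) + b • (⁅q, v'⁆ - v')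
      - ⁅⁅q, v⁆ - v, v'⁆ - ⁅v, ⁅q, v'⁆ - v'⁆ := by
    simp only [r, lie_sub, sub_lie, lie_smul, leibniz_lie q v v']
    module
  rw [key]
  refine K.sub_mem (K.sub_mem (K.add_mem (K.add_mem (K.sub_mem ?_ hr) (K.smul_mem a hDv))
    (K.smul_mem b hDv')) (lie_mem_absorbing_pPower hpm hqi hDv v'))
    (lie_mem_absorbing_pPower' hpm hqi hDv' v)
  exact lie_mem_absorbing_pPower' hpm hqi hr q

theorem mem_pPower_of_forall_lie_sub_mem (v₀ : L) : v₀ ∈ pPower F pm := by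
  by_contra hv₀
  have hqv₀ : q + v₀ ∉ pPower F pm := fun h =>
    hv₀ (by simpa using (pPower F pm).sub_mem h hq)
  have h := lie_mem_absorbing_of_not_mem_pPower hpm hqi hq hqv hqv₀ hv₀
  rw [add_lie, lie_self, add_zero] at h
  have := (pPower F pm).absorbing.sub_mem h (lie_sub_mem_absorbing hpm hqi hq hqv hv₀)
  rw [sub_sub_cancel] at this
  exact hv₀ (absorbing_le this)

end ActsAsIdentity

theorem lie_mem_pPower_of_mem {w : L} (hw : w ∈ pPower F pm) (v : L) :
    ⁅w, v⁆ ∈ pPower F pm := by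
  by_contra hwv
  obtain ⟨t, ht⟩ := exists_lie_sub_smul_mem_pPower hpm hqi hw v
  have ht0 : t ≠ 0 := by rintro rfl; exact hwv (by simpa using ht)
  have hv : v ∉ pPower F pm := fun hv => hwv ((pPower F pm).lie_mem hw hv)
  have hq : t⁻¹ • w ∈ pPower F pm := (pPower F pm).smul_mem _ hw
  have hqv := Submodule.apply_mem_of_forall_exists_sub_smul_mem (W := (pPower F pm).toSubmodule)
    (f := ad F L (t⁻¹ • w) - LinearMap.id) (fun v' => ?_) hv ?_
  · exact hv (mem_pPower_of_forall_lie_sub_mem hpm hqi hq (fun v' => by simpa using hqv v') v)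
  · obtain ⟨s, hs⟩ := exists_lie_sub_smul_mem_pPower hpm hqi hq v'
    refine ⟨s - 1, ?_⟩
    have e : (ad F L (t⁻¹ • w) - LinearMap.id : Module.End F L) v' - (s - 1) • v' =
        ⁅t⁻¹ • w, v'⁆ - s • v' := by
      simp only [LinearMap.sub_apply, ad_apply, LinearMap.id_apply, sub_smul, one_smul]
      abel
    rw [e]
    exact hs
  · convert (pPower F pm).toSubmodule.smul_mem t⁻¹ ht using 1
    rw [LinearMap.sub_apply, ad_apply, LinearMap.id_apply, smul_lie, smul_sub, smul_smul,
      inv_mul_cancel₀ ht0, one_smul]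

theorem lie_mem_pPower_of_mem' {w : L} (hw : w ∈ pPower F pm) (v : L) :
    ⁅v, w⁆ ∈ pPower F pm := by
  rw [← lie_skew]
  exact neg_mem (lie_mem_pPower_of_mem hpm hqi hw v)

theorem lie_mem_pPower_of_lie_lie_sub_smul_mem {x y : L} {c : F} (hc : c ≠ 0)
    (h : ⁅x, ⁅x, y⁆⁆ - c • ⁅x, y⁆ ∈ pPower F pm) : ⁅x, y⁆ ∈ pPower F pm := by
  have hpow := Submodule.pow_apply_sub_pow_smul_mem (W := (pPower F pm).toSubmodule)
    (f := ad F L x) (fun w hw => lie_mem_pPower_of_mem' hpm hqi hw x) h (p - 1)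
  have hpx : (ad F L x ^ (p - 1)) ⁅x, y⁆ = ⁅pm x, y⁆ := by
    rw [hpm.ad_pow, ← ad_apply (R := F) (L := L) x y, ← Module.End.mul_apply, ← pow_succ,
      Nat.sub_add_cancel (Nat.pos_of_neZero p)]
  rw [hpx] at hpow
  have h' := (pPower F pm).sub_mem (lie_mem_pPower_of_mem hpm hqi (pm_mem_pPower x) y) hpow
  rw [sub_sub_cancel] at h'
  exact ((pPower F pm).toSubmodule.smul_mem_iff (pow_ne_zero _ hc)).mp h'

theorem lie_mem_pPower (x y : L) : ⁅x, y⁆ ∈ pPower F pm := by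
  obtain ⟨a, b, hab⟩ := exists_lie_sub_smul_sub_smul_mem hpm hqi x y
  have hr : ⁅x, y⁆ - a • x - b • y ∈ pPower F pm :=
    sup_le (pOrbitSpan_map_le_pPower (F := F) (pm := pm) x) (pOrbitSpan_map_le_pPower y) hab
  have hx : ⁅x, ⁅x, y⁆⁆ - b • ⁅x, y⁆ ∈ pPower F pm := by
    convert lie_mem_pPower_of_mem' hpm hqi hr x using 1
    simp only [lie_sub, lie_smul, lie_self, smul_zero, sub_zero]
  have hy : ⁅y, ⁅y, x⁆⁆ - (-a) • ⁅y, x⁆ ∈ pPower F pm := by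
    convert neg_mem (lie_mem_pPower_of_mem' hpm hqi hr y) using 1
    simp only [lie_sub, lie_smul, lie_self, smul_zero, sub_zero]
    rw [← lie_skew x y, lie_neg]
    module
  by_cases hb : b = 0
  · by_cases ha : a = 0
    · simpa [ha, hb] using hr
    · rw [← lie_skew]
      exact neg_mem (lie_mem_pPower_of_lie_lie_sub_smul_mem hpm hqi (neg_ne_zero.mpr ha) hy)
  · exact lie_mem_pPower_of_lie_lie_sub_smul_mem hpm hqi hb hx

theorem lowerCentralSeries_two_le {N : LieIdeal F L} (hN : ∀ x y : L, (ad F L x ^ p) y ∈ N) :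
    LieModule.lowerCentralSeries F L L 2 ≤ N := by
  have hP : pPower F pm ≤ (N.normalizer : LieSubalgebra F L) := pPower_le fun z => by
    rw [LieIdeal.mem_toLieSubalgebra, LieSubmodule.mem_normalizer]
    intro x
    rw [← lie_skew, hpm.ad_pow]
    exact neg_mem (hN z x)
  rw [LieModule.lowerCentralSeries_succ, LieSubmodule.top_lie_le_iff_le_normalizer,
    LieModule.lowerCentralSeries_succ, LieModule.lowerCentralSeries_zero, LieSubmodule.lie_le_iff]
  exact fun x _ y _ => hP (lie_mem_pPower hpm hqi x y)

end QuasiIdeal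

section LowerCentralSeries

open LieModule

variable {F : Type*} [Field F] {L : Type*} [LieRing L] [LieAlgebra F L]

theorem ad_pow_succ_apply_mem_lowerCentralSeries_succ {k : ℕ} {y : L}
    (hy : y ∈ lowerCentralSeries F L L k) (u : L) (n : ℕ) :
    (ad F L u ^ (n + 1)) y ∈ lowerCentralSeries F L L (k + 1) := by
  rw [pow_succ, Module.End.mul_apply]
  refine LieIdeal.ad_pow_apply_mem _ u ?_ n
  rw [lowerCentralSeries_succ]
  exact LieSubmodule.lie_mem_lie (LieSubmodule.mem_top u) hy

section Engel

variable {p : ℕ} [Fact (1 < p)] {pm : L → L} (hpm : IsPMapping F L p pm)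
  (hqi : ∀ S : LieSubalgebra F L, IsPSub F pm S → IsPQuasiIdeal F pm S)
  {k : ℕ} (hE : ∀ a b : L, ⁅a, ⁅a, b⁆⁆ ∈ lowerCentralSeries F L L k)
include hE

theorem ad_pow_apply_mem_lowerCentralSeries (u x : L) :
    (ad F L u ^ p) x ∈ lowerCentralSeries F L L k := by
  have hp : p = p - 2 + 2 := by have := (Fact.out : 1 < p); omega
  rw [hp, pow_add, Module.End.mul_apply, sq, Module.End.mul_apply]
  exact LieIdeal.ad_pow_apply_mem _ u (hE u x) _

include hpm

theorem exists_lie_sub_smul_mem_lowerCentralSeries_succ {u z : L}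
    (hz : z ∈ pOrbitSpan F pm (pm u)) (x : L) :
    ∃ s : F, ⁅z, x⁆ - s • (ad F L u ^ p) x ∈ lowerCentralSeries F L L (k + 1) := by
  obtain ⟨s, hs⟩ := Submodule.exists_sub_smul_mem_of_mem_span_singleton_sup
    (pOrbitSpan_le_span_singleton_sup (pm u) hz)
  refine ⟨s, ?_⟩
  have hT : ∀ y ∈ pOrbitSpan F pm (pm (pm u)),
      ⁅y, x⁆ ∈ lowerCentralSeries F L L (k + 1) := by
    intro y hy
    induction hy using Submodule.span_induction with
    | mem y hy =>
      obtain ⟨j, rfl⟩ := hy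
      show ⁅pm^[j] (pm (pm u)), x⁆ ∈ _
      have h4 : 2 ^ 2 ≤ p ^ (j + 2) := calc
        2 ^ 2 ≤ p ^ 2 := Nat.pow_le_pow_left (Fact.out : 1 < p) 2
        _ ≤ p ^ (j + 2) := Nat.pow_le_pow_right (by have := (Fact.out : 1 < p); omega) (by omega)
      obtain ⟨n, hn⟩ : ∃ n, p ^ (j + 2) = n + 1 + 2 := ⟨p ^ (j + 2) - 3, by omega⟩
      rw [← Function.iterate_succ_apply, ← Function.iterate_succ_apply, ← ad_apply (R := F),
        hpm.ad_iterate, hn, pow_add, Module.End.mul_apply]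
      exact ad_pow_succ_apply_mem_lowerCentralSeries_succ (hE u x) u n
    | zero => simp
    | add y y' _ _ hy hy' => rw [add_lie]; exact add_mem hy hy'
    | smul c y _ hy => rw [smul_lie]; exact SMulMemClass.smul_mem c hy
  convert hT _ hs using 1
  rw [sub_lie, smul_lie, hpm.ad_pow]

include hqi

theorem exists_lie_lie_add_smul_mem_lowerCentralSeries_succ {x u : L}
    (hxu : ⁅x, u⁆ ∉ lowerCentralSeries F L L k) :
    ∃ s : F,
      ⁅x, ⁅x, u⁆⁆ + s • (ad F L u ^ p) x ∈ lowerCentralSeries F L L (k + 1) := by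
  obtain ⟨a, b, hab⟩ := exists_lie_sub_smul_sub_smul_mem hpm hqi x u
  obtain ⟨z₁, hz₁, z₂, hz₂, hz⟩ := Submodule.mem_sup.mp hab
  obtain ⟨s, hs⟩ := exists_lie_sub_smul_mem_lowerCentralSeries_succ hpm hE hz₂ x
  have hz₁x : ⁅z₁, x⁆ = 0 := hpm.lie_eq_zero_of_mem_pOrbitSpan (pOrbitSpan_map_le x hz₁)
    (iterate_mem_pOrbitSpan x 0)
  have hxux : ⁅⁅x, u⁆, x⁆ = b • ⁅u, x⁆ + ⁅z₂, x⁆ := by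
    rw [show ⁅x, u⁆ = a • x + b • u + z₁ + z₂ by rw [add_assoc, hz]; abel]
    simp only [add_lie, smul_lie, lie_self, smul_zero, hz₁x, zero_add, add_zero]
  have key : ⁅x, ⁅x, u⁆⁆ + s • (ad F L u ^ p) x =
      b • ⁅x, u⁆ - (⁅z₂, x⁆ - s • (ad F L u ^ p) x) := by
    rw [← lie_skew x ⁅x, u⁆, hxux, ← lie_skew x u]
    module
  have hb : b = 0 := by
    by_contra hb
    refine hxu (((lowerCentralSeries F L L k).toSubmodule.smul_mem_iff hb).mp ?_)
    rw [show b • ⁅x, u⁆ =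
        ⁅x, ⁅x, u⁆⁆ + s • (ad F L u ^ p) x + (⁅z₂, x⁆ - s • (ad F L u ^ p) x) by
      rw [key]; abel]
    exact add_mem (add_mem (hE x u) (SMulMemClass.smul_mem s
      (ad_pow_apply_mem_lowerCentralSeries hE u x)))
      (antitone_lowerCentralSeries F L L k.le_succ hs)
  exact ⟨s, by rw [key, hb, zero_smul, zero_sub]; exact neg_mem hs⟩

theorem lie_lie_mem_lowerCentralSeries_succ (x u : L) :
    ⁅x, ⁅x, u⁆⁆ ∈ lowerCentralSeries F L L (k + 1) := by
  by_cases hxu : ⁅x, u⁆ ∈ lowerCentralSeries F L L k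
  · rw [lowerCentralSeries_succ]
    exact LieSubmodule.lie_mem_lie (LieSubmodule.mem_top x) hxu
  have hp := (Fact.out : 1 < p)
  rcases (show p = 2 ∨ 3 ≤ p by omega) with rfl | hp3
  · -- For `v := t • x - u`, `⁅v, ⁅v, x⁆⁆` is the relation obtained for `(u, x)`, hence `≡ 0`.
    have hux : ⁅u, x⁆ ∉ lowerCentralSeries F L L k := fun h =>
      hxu (by rw [← lie_skew]; exact neg_mem h)
    obtain ⟨t, ht⟩ := exists_lie_lie_add_smul_mem_lowerCentralSeries_succ hpm hqi hE hux
    have hv : ⁅x, t • x - u⁆ ∉ lowerCentralSeries F L L k := by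
      rwa [lie_sub, lie_smul, lie_self, smul_zero, zero_sub, neg_mem_iff]
    obtain ⟨s, hs⟩ := exists_lie_lie_add_smul_mem_lowerCentralSeries_succ hpm hqi hE hv
    convert neg_mem (sub_mem hs (SMulMemClass.smul_mem s ht)) using 1
    simp only [sq, Module.End.mul_apply, ad_apply, lie_sub, sub_lie, lie_smul, smul_lie, lie_self,
      smul_zero, zero_sub]
    rw [← lie_skew u x]
    simp only [lie_neg, smul_neg]
    module
  · obtain ⟨s, hs⟩ := exists_lie_lie_add_smul_mem_lowerCentralSeries_succ hpm hqi hE hxu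
    have hpow : (ad F L u ^ p) x ∈ lowerCentralSeries F L L (k + 1) := by
      rw [show p = p - 3 + 1 + 2 by omega, pow_add, Module.End.mul_apply, sq, Module.End.mul_apply]
      exact ad_pow_succ_apply_mem_lowerCentralSeries_succ (hE u x) u _
    simpa using sub_mem hs (SMulMemClass.smul_mem s hpow)

end Engel

variable {p : ℕ} [Fact (1 < p)] {pm : L → L} (hpm : IsPMapping F L p pm)
  (hqi : ∀ S : LieSubalgebra F L, IsPSub F pm S → IsPQuasiIdeal F pm S)
include hpm hqi

theorem lie_lie_mem_lowerCentralSeries (k : ℕ) (x u : L) :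
    ⁅x, ⁅x, u⁆⁆ ∈ lowerCentralSeries F L L k := by
  induction k generalizing x u with
  | zero => exact LieSubmodule.mem_top _
  | succ k ih => exact lie_lie_mem_lowerCentralSeries_succ hpm hqi ih x u

theorem lowerCentralSeries_two_eq : lowerCentralSeries F L L 2 = lowerCentralSeries F L L p := by
  refine le_antisymm (lowerCentralSeries_two_le hpm hqi fun x y => ?_)
    (antitone_lowerCentralSeries F L L (Fact.out : 1 < p))
  rw [Module.End.pow_apply]
  exact iterate_toEnd_mem_lowerCentralSeries F L L x y p

theorem lowerCentralSeries_two_eq_bot [IsNilpotent L L] : lowerCentralSeries F L L 2 = ⊥ := by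
  obtain ⟨k, hk⟩ := IsNilpotent.nilpotent F L L
  refine le_bot_iff.mp (lowerCentralSeries_two_le hpm hqi fun x y => ?_)
  rw [← hk]
  exact ad_pow_apply_mem_lowerCentralSeries (lie_lie_mem_lowerCentralSeries hpm hqi k) x y

end LowerCentralSeries

theorem derived_le_pPower_of_all_quasiIdeal_general
    (F : Type*) [Field F] (L : Type*) [LieRing L] [LieAlgebra F L]
    (p : ℕ) [Fact p.Prime]
    (pm : L → L) (hpm : IsPMapping F L p pm)
    (h : ∀ S : LieSubalgebra F L, IsPSub F pm S → IsPQuasiIdeal F pm S) :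
    (∀ x y : L, ⁅x, y⁆ ∈ pSpan F pm (Set.range pm)) ∧
      LieModule.lowerCentralSeries F L L 2 = LieModule.lowerCentralSeries F L L p ∧
      (LieModule.IsNilpotent L L → LieModule.lowerCentralSeries F L L 2 = ⊥) :=
  ⟨lie_mem_pPower hpm h, lowerCentralSeries_two_eq hpm h,
    fun _ => lowerCentralSeries_two_eq_bot hpm h⟩

/-- if every restricted subalgebra of `L` is a restricted quasi-ideal, then
`[L,L] ⊆ L^[p]` and `L^3 = L^{p+1}`; in particular if `L` is nilpotent it has class at
most `2`. -/
theorem derived_le_pPower_of_all_quasiIdeal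
    (F : Type*) [Field F] (L : Type*) [LieRing L] [LieAlgebra F L]
    [FiniteDimensional F L] (p : ℕ) [Fact p.Prime] [CharP F p]
    (pm : L → L) (hpm : IsPMapping F L p pm)
    (h : ∀ S : LieSubalgebra F L, IsPSub F pm S → IsPQuasiIdeal F pm S) :
    (∀ x y : L, ⁅x, y⁆ ∈ pSpan F pm (Set.range pm)) ∧
      LieModule.lowerCentralSeries F L L 2 = LieModule.lowerCentralSeries F L L p ∧
      (LieModule.IsNilpotent L L → LieModule.lowerCentralSeries F L L 2 = ⊥) :=
  derived_le_pPower_of_all_quasiIdeal_general F L p pm hpm h
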